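/- arXiv:1211.6044 — 2 statements merged into one kernel-verified Lean document; each statement's English description precedes it below -/
import Mathlib

section
/- If q ≡ 1 (mod n) then there is no permutation polynomial of F_q of degree n. -/
/-!
Hermite's criterion: write `q - 1 = n m`. Since `∑ x, x ^ i` vanishes for `i < q - 1` and equals
`-1` for `i = q - 1`, summing a polynomial of degree at most `q - 1` over `F` gives minus its
coefficient of `X ^ (q - 1)`. If `f` permuted `F`, then `∑ c, f(c) ^ m = ∑ c, c ^ m = 0` as
`m < q - 1`; but `f ^ m` has degree exactly `q - 1`, so that sum is `-(lc f) ^ m ≠ 0`.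
-/

open Polynomial Finset

namespace FiniteField

variable {K : Type*} [Field K] [Fintype K]

local notation "q" => Fintype.card K

theorem sum_pow_card_sub_one : ∑ x : K, x ^ (q - 1) = -1 := by
  classical
  have hq : 1 < q := Fintype.one_lt_card
  rw [← sum_erase_add _ _ (mem_univ 0), zero_pow (by omega), add_zero,
    sum_congr rfl fun x hx => pow_card_sub_one_eq_one x (ne_of_mem_erase hx), sum_const,
    card_erase_of_mem (mem_univ _), card_univ, nsmul_one, Nat.cast_sub hq.le,
    cast_card_eq_zero, Nat.cast_one, zero_sub]

theorem sum_eval_eq_neg_coeff_card_sub_one {p : K[X]} (hp : p.natDegree ≤ q - 1) :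
    ∑ x : K, p.eval x = -p.coeff (q - 1) := by
  simp_rw [eval_eq_sum_range' (Nat.lt_succ_of_le hp)]
  rw [sum_comm, sum_range_succ, sum_eq_zero fun i hi => ?_, zero_add, ← mul_sum,
    sum_pow_card_sub_one, mul_neg_one]
  rw [← mul_sum, sum_pow_lt_card_sub_one K i (mem_range.mp hi), mul_zero]

theorem coeff_pow_card_sub_one_eq_zero_of_bijective {f : K[X]}
    (hf : Function.Bijective fun x => f.eval x) {m : ℕ} (hm : m < q - 1)
    (hdeg : (f ^ m).natDegree ≤ q - 1) : (f ^ m).coeff (q - 1) = 0 := by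
  have h := hf.sum_comp (· ^ m)
  simp only [← eval_pow, sum_eval_eq_neg_coeff_card_sub_one hdeg,
    sum_pow_lt_card_sub_one K m hm] at h
  exact neg_eq_zero.mp h

end FiniteField

theorem Nat.one_lt_of_mod_eq_one {a n : ℕ} (h : a % n = 1) (ha : a ≠ 1) : 1 < n := by
  by_contra! hn
  interval_cases n
  · exact ha (Nat.mod_zero a ▸ h)
  · exact absurd (h ▸ Nat.mod_one a) one_ne_zero

theorem no_pp_of_card_modCast_one_general {F : Type*} [Field F] [Fintype F]
    (n : ℕ) (hq : Fintype.card F % n = 1)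
    (f : F[X]) (hdeg : f.natDegree = n) :
    ¬ Function.Bijective (fun c : F => f.eval c) := by
  intro hf
  set q := Fintype.card F
  have hq1 : 1 < q := Fintype.one_lt_card
  have hn : 1 < n := Nat.one_lt_of_mod_eq_one hq hq1.ne'
  obtain ⟨m, hqm⟩ : n ∣ q - 1 := hq ▸ Nat.dvd_sub_mod q
  have hm : m < q - 1 := by
    rw [hqm]
    exact lt_mul_left (Nat.pos_of_ne_zero (by rintro rfl; omega)) hn
  have hdeg' : (f ^ m).natDegree = q - 1 := by rw [natDegree_pow, hdeg, hqm, mul_comm]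
  have hf0 : f ≠ 0 := by rintro rfl; simp at hdeg; omega
  apply pow_ne_zero m (leadingCoeff_ne_zero.mpr hf0)
  rw [← leadingCoeff_pow, leadingCoeff, hdeg']
  exact FiniteField.coeff_pow_card_sub_one_eq_zero_of_bijective hf hm hdeg'.le

theorem no_pp_of_card_modCast_one {F : Type*} [Field F] [Fintype F]
    (n : ℕ) (hn : 2 ≤ n) (hq : Fintype.card F % n = 1)
    (f : F[X]) (hdeg : f.natDegree = n) :
    ¬ Function.Bijective (fun c : F => f.eval c) :=
  no_pp_of_card_modCast_one_general n hq f hdeg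
end

section
/- Let f(x) = x^n + a_{n-2} x^{n-2} + ... + a_1 x ∈ F_q[x] be a permutation polynomial of F_q in normalised form (monic, zero constant term, zero coefficient of x^{n-1}), where 3 ≤ n ≤ q-2 and q ≡ -1 (mod n). Then a_{n-2} = 0. -/
/-!
Write `q + 1 = n k`. As `f` permutes `F` and `k < q - 1`, `∑ c, f(c)^k = ∑ c, c^k = 0`.
On the other hand `f^k` has degree `q + 1 < 2(q - 1)`, and summing such a polynomial over `F`
gives minus its coefficient of `X^(q-1) = X^(nk-2)`. Writing `f = X^n + g` with
`deg g ≤ n - 2`, that coefficient is `k a_{n-2}`, and `k` is a unit in `F` since `n k ≡ 1`.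
-/

open Polynomial Finset

namespace FiniteField

variable {K : Type*} [Field K] [Fintype K]

theorem sum_pow (i : ℕ) :
    ∑ x : K, x ^ i = if i ≠ 0 ∧ Fintype.card K - 1 ∣ i then -1 else 0 := by
  classical
  rcases eq_or_ne i 0 with rfl | hi
  · simp
  rw [← sum_erase univ (zero_pow hi), sum_subtype (univ.erase 0) (p := (· ≠ 0)) (by simp),
    ← unitsEquivNeZero.sum_comp]
  simpa [hi] using sum_pow_units K i

theorem sum_eval_eq_neg_coeff {P : K[X]} (hP : P.natDegree < 2 * (Fintype.card K - 1)) :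
    ∑ x : K, P.eval x = -P.coeff (Fintype.card K - 1) := by
  have hq : 1 < Fintype.card K := Fintype.one_lt_card
  simp_rw [eval_eq_sum_range, sum_comm (γ := K), ← mul_sum, sum_pow]
  rw [sum_eq_single (Fintype.card K - 1)]
  · rw [if_pos ⟨by omega, dvd_rfl⟩, mul_neg_one]
  · rintro i hi hne
    rw [if_neg, mul_zero]
    rintro ⟨hi0, j, rfl⟩
    have hj : j < 2 := lt_of_mul_lt_mul_left (a := Fintype.card K - 1)
      (by rw [mem_range] at hi; omega) (Nat.zero_le _)
    interval_cases j <;> simp_all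
  · intro h
    rw [coeff_eq_zero_of_natDegree_lt (by rw [mem_range] at h; omega), zero_mul]

end FiniteField

namespace Polynomial

theorem Monic.natDegree_sub_X_pow_le {R : Type*} [Ring R] {f : R[X]} {n : ℕ} (hf : f.Monic)
    (hdeg : f.natDegree = n) (hsub : f.coeff (n - 1) = 0) : (f - X ^ n).natDegree ≤ n - 2 := by
  rw [natDegree_le_iff_coeff_eq_zero]
  intro i hi
  rw [coeff_sub, coeff_X_pow]
  rcases lt_trichotomy i n with h | rfl | h
  · rw [if_neg h.ne, sub_zero, show i = n - 1 by omega, hsub]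
  · rw [if_pos rfl, ← hdeg, hf.coeff_natDegree, sub_self]
  · rw [if_neg h.ne', sub_zero, coeff_eq_zero_of_natDegree_lt (hdeg ▸ h)]

theorem coeff_X_pow_add_pow_succ {R : Type*} [CommSemiring R] {n m : ℕ} {g : R[X]}
    (hmn : m < n) (hg : g.natDegree ≤ m) (k : ℕ) :
    ((X ^ n + g) ^ (k + 1)).coeff (n * k + m) = (k + 1) * g.coeff m := by
  induction k with
  | zero => simp [coeff_X_pow, hmn.ne]
  | succ k ih =>
    have hdeg : (X ^ n + g).natDegree ≤ n :=
      natDegree_add_le_of_degree_le (natDegree_X_pow_le n) (hg.trans hmn.le)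
    have htop : ((X ^ n + g) ^ (k + 1)).coeff ((k + 1) * n) = 1 := by
      rw [coeff_pow_of_natDegree_le hdeg, coeff_add, coeff_X_pow_self,
        coeff_eq_zero_of_natDegree_lt (hg.trans_lt hmn), add_zero, one_pow]
    have hshift :
        ((X ^ n + g) ^ (k + 1) * X ^ n).coeff (n * (k + 1) + m) = (k + 1) * g.coeff m := by
      rw [show n * (k + 1) + m = n * k + m + n by ring, coeff_mul_X_pow, ih]
    have hcross : ((X ^ n + g) ^ (k + 1) * g).coeff (n * (k + 1) + m) = g.coeff m := by
      rw [mul_comm n, coeff_mul_add_eq_of_natDegree_le (natDegree_pow_le_of_le _ hdeg) hg, htop,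
        one_mul]
    rw [pow_succ, mul_add, coeff_add, hshift, hcross]
    push_cast
    ring

end Polynomial

theorem third_highest_coeff_zero_general {F : Type*} [Field F] [Fintype F]
    (n : ℕ) (hn3 : 3 ≤ n) (hnq : n ≤ Fintype.card F - 2)
    (hmod : Fintype.card F % n = n - 1)
    (f : F[X]) (hmonic : f.Monic) (hdeg : f.natDegree = n)
    (h1 : f.coeff (n - 1) = 0)
    (hf : Function.Bijective (fun c : F => f.eval c)) :
    f.coeff (n - 2) = 0 := by
  set q := Fintype.card F
  obtain ⟨k, hnk⟩ : ∃ k, q + 1 = n * (k + 1) := ⟨q / n, by have := Nat.div_add_mod q n; grind⟩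
  have hkq : k + 1 < q - 1 := by
    have := Nat.mul_le_mul_right (k + 1) hn3
    omega
  have hpow_sum : ∑ c : F, (f ^ (k + 1)).eval c = 0 := by
    simp_rw [eval_pow]
    rw [hf.sum_comp (· ^ (k + 1)), FiniteField.sum_pow_lt_card_sub_one F _ hkq]
  have hcoeff : (f ^ (k + 1)).coeff (q - 1) = (k + 1) * f.coeff (n - 2) := by
    conv_lhs => rw [← add_sub_cancel (X ^ n) f]
    rw [show q - 1 = n * k + (n - 2) by grind,
      coeff_X_pow_add_pow_succ (by omega) (hmonic.natDegree_sub_X_pow_le hdeg h1), coeff_sub,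
      coeff_X_pow, if_neg (by omega), sub_zero]
  have hk : (k + 1 : F) ≠ 0 := by
    refine right_ne_zero_of_mul (a := (n : F)) ?_
    rw [← Nat.cast_succ, ← Nat.cast_mul, ← hnk, Nat.cast_succ, FiniteField.cast_card_eq_zero,
      zero_add]
    exact one_ne_zero
  have hdeg_pow : (f ^ (k + 1)).natDegree < 2 * (q - 1) := by
    rw [hmonic.natDegree_pow, hdeg, mul_comm, ← hnk]
    omega
  rw [FiniteField.sum_eval_eq_neg_coeff hdeg_pow, hcoeff, neg_eq_zero] at hpow_sum
  exact (mul_eq_zero.mp hpow_sum).resolve_left hk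

theorem third_highest_coeff_zero {F : Type*} [Field F] [Fintype F]
    (n : ℕ) (hn3 : 3 ≤ n) (hnq : n ≤ Fintype.card F - 2)
    (hmod : Fintype.card F % n = n - 1)
    (f : F[X]) (hmonic : f.Monic) (hdeg : f.natDegree = n)
    (h0 : f.coeff 0 = 0) (h1 : f.coeff (n - 1) = 0)
    (hf : Function.Bijective (fun c : F => f.eval c)) :
    f.coeff (n - 2) = 0 :=
  third_highest_coeff_zero_general n hn3 hnq hmod f hmonic hdeg h1 hf
end
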